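/- arXiv:math/0510113 — 3 statements merged into one kernel-verified Lean document; each statement's English description precedes it below -/
import Mathlib

section
/- For every prime p, the measure μ₊(x)dx on [-2,2] with density μ₊(x) = ((p-1)/(2π)) · √(4-x²)/((p^{1/2} + p^{-1/2} - x)²) is a probability measure, i.e., ∫_{-2}^{2} μ₊(x) dx = 1. -/
/-!
With `a = √p + 1/√p > 2` one has `√(a² - 4) = √p - 1/√p`, and the Cauchy-type integral
`∫_{-2}^{2} √(4 - x²)/(a - x)² dx = π (a/√(a² - 4) - 1)` follows from an explicit
antiderivative.
For this `a` the right-hand side is `2π/(p - 1)`, which the normalising constant `(p - 1)/(2π)`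
cancels.
-/

open Real MeasureTheory Set

section SemicircleCauchy

variable {a b x : ℝ}

/-- For `a > 2` and `b = √(a² - 4)`, an antiderivative of `√(4 - x²)/(a - x)²` on `[-2, 2]`.
The Möbius map `x ↦ (a x - 4)/(2 (a - x))` sends `[-2, 2]` onto `[-1, 1]` and `1 - u²` of it
factors through `4 - x²`, which is why its `arcsin` differentiates to an algebraic function. -/
noncomputable def semicircleCauchyPrimitive (a b x : ℝ) : ℝ :=
  √(4 - x ^ 2) / (a - x) - arcsin (x / 2) + a / b * arcsin ((a * x - 4) / (2 * (a - x)))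

lemma one_sub_sq_mobius (hax : a - x ≠ 0) :
    1 - ((a * x - 4) / (2 * (a - x))) ^ 2 = (4 - x ^ 2) * (a ^ 2 - 4) / (2 * (a - x)) ^ 2 := by
  field_simp
  ring

lemma hasDerivAt_sqrt_four_sub_sq (hx : x ^ 2 < 4) :
    HasDerivAt (fun y ↦ √(4 - y ^ 2)) (-x / √(4 - x ^ 2)) x := by
  have hpos : 0 < 4 - x ^ 2 := by linarith
  have hinner : HasDerivAt (fun y : ℝ ↦ 4 - y ^ 2) (-(2 * x)) x := by
    simpa using (hasDerivAt_pow 2 x).const_sub 4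
  refine ((hasDerivAt_sqrt hpos.ne').comp x hinner).congr_deriv ?_
  field_simp

lemma hasDerivAt_mobius (hax : a - x ≠ 0) :
    HasDerivAt (fun y ↦ (a * y - 4) / (2 * (a - y)))
      ((a * (2 * (a - x)) - (a * x - 4) * (-2)) / (2 * (a - x)) ^ 2) x := by
  have hnum : HasDerivAt (fun y : ℝ ↦ a * y - 4) a x := by
    simpa using ((hasDerivAt_id x).const_mul a).sub_const 4
  have hden : HasDerivAt (fun y : ℝ ↦ 2 * (a - y)) (-2) x := by
    simpa using ((hasDerivAt_id x).const_sub a).const_mul 2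
  exact hnum.div hden (by simpa using hax)

lemma hasDerivAt_semicircleCauchyPrimitive (ha : 2 < a) (hb : 0 < b) (hab : b ^ 2 = a ^ 2 - 4)
    (hx : x ∈ Ioo (-2) 2) :
    HasDerivAt (semicircleCauchyPrimitive a b) (√(4 - x ^ 2) / (a - x) ^ 2) x := by
  obtain ⟨hx₁, hx₂⟩ := hx
  have hx4 : x ^ 2 < 4 := by nlinarith
  have hax : 0 < a - x := by linarith
  set s := √(4 - x ^ 2)
  have hs : 0 < s := sqrt_pos.mpr (by linarith)
  have hs2 : s ^ 2 = 4 - x ^ 2 := sq_sqrt (by linarith)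
  set u := (a * x - 4) / (2 * (a - x))
  have hu : 1 - u ^ 2 = (s * b / (2 * (a - x))) ^ 2 := by
    rw [one_sub_sq_mobius hax.ne', div_pow, mul_pow s b, hs2, hab]
  have hu1 : u ^ 2 < 1 := by nlinarith [show 0 < s * b / (2 * (a - x)) by positivity]
  have hsqrt_u : √(1 - u ^ 2) = s * b / (2 * (a - x)) := by
    rw [hu, sqrt_sq (by positivity)]
  have hsqrt_half : √(1 - (x / 2) ^ 2) = s / 2 := by
    rw [show 1 - (x / 2) ^ 2 = (s / 2) ^ 2 by rw [div_pow s, hs2]; ring, sqrt_sq (by positivity)]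
  have hfrac := (hasDerivAt_sqrt_four_sub_sq hx4).div ((hasDerivAt_id x).const_sub a) hax.ne'
  have harcsin_half := (hasDerivAt_arcsin (x := x / 2) (by linarith) (by linarith)).comp x
    ((hasDerivAt_id x).div_const 2)
  have harcsin_u := (hasDerivAt_arcsin (x := u) (by nlinarith) (by nlinarith)).comp x
    (hasDerivAt_mobius hax.ne')
  refine ((hfrac.sub harcsin_half).add (harcsin_u.const_mul (a / b))).congr_deriv ?_
  simp only [id_eq, show √(4 - x ^ 2) = s from rfl, hsqrt_u, hsqrt_half]
  field_simp
  linear_combination a * (x - a) * hab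

lemma continuousOn_semicircleCauchyPrimitive (ha : 2 < a) :
    ContinuousOn (semicircleCauchyPrimitive a b) (Icc (-2) 2) := by
  have hax : ∀ x ∈ Icc (-2 : ℝ) 2, a - x ≠ 0 := fun x hx ↦ by linarith [hx.2]
  unfold semicircleCauchyPrimitive
  refine ((ContinuousOn.div (by fun_prop) (by fun_prop) hax).sub (by fun_prop)).add
    (continuousOn_const.mul (continuous_arcsin.comp_continuousOn ?_))
  exact ContinuousOn.div (by fun_prop) (by fun_prop) fun x hx ↦ by simpa using hax x hx

lemma semicircleCauchyPrimitive_two (ha : a ≠ 2) :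
    semicircleCauchyPrimitive a b 2 = a / b * (π / 2) - π / 2 := by
  have : (a * 2 - 4) / (2 * (a - 2)) = 1 := by
    rw [div_eq_one_iff_eq (by intro h; apply ha; linarith)]; ring
  rw [semicircleCauchyPrimitive, this]
  norm_num
  ring

lemma semicircleCauchyPrimitive_neg_two (ha : a ≠ -2) :
    semicircleCauchyPrimitive a b (-2) = π / 2 - a / b * (π / 2) := by
  have : (a * -2 - 4) / (2 * (a - -2)) = -1 := by
    rw [div_eq_iff (by intro h; apply ha; linarith)]; ring
  rw [semicircleCauchyPrimitive, this]
  norm_num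
  ring

theorem integral_sqrt_four_sub_sq_div_sq (ha : 2 < a) :
    ∫ x in (-2 : ℝ)..2, √(4 - x ^ 2) / (a - x) ^ 2 = π * (a / √(a ^ 2 - 4) - 1) := by
  have ha4 : 0 < a ^ 2 - 4 := by nlinarith
  have hint : IntervalIntegrable (fun x : ℝ ↦ √(4 - x ^ 2) / (a - x) ^ 2) volume (-2) 2 := by
    refine ContinuousOn.intervalIntegrable ?_
    rw [uIcc_of_le (by norm_num)]
    exact ContinuousOn.div (by fun_prop) (by fun_prop) fun x hx ↦
      pow_ne_zero 2 (by linarith [hx.2])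
  rw [intervalIntegral.integral_eq_sub_of_hasDerivAt_of_le (by norm_num)
    (continuousOn_semicircleCauchyPrimitive ha)
    (fun x hx ↦ hasDerivAt_semicircleCauchyPrimitive ha (sqrt_pos.mpr ha4) (sq_sqrt ha4.le) hx)
    hint, semicircleCauchyPrimitive_two (by linarith),
    semicircleCauchyPrimitive_neg_two (by linarith)]
  ring

end SemicircleCauchy

lemma sqrt_sq_add_inv_sub_four {q : ℝ} (hq : 1 ≤ q) : √((q + 1 / q) ^ 2 - 4) = q - 1 / q := by
  have hq0 : 0 < q := by linarith
  have hle : 1 / q ≤ q := by rw [div_le_iff₀ hq0]; nlinarith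
  rw [show (q + 1 / q) ^ 2 - 4 = (q - 1 / q) ^ 2 by field_simp; ring, sqrt_sq (by linarith)]

/-- For every prime `p`, the density `μ₊(x) = ((p-1)/(2π)) · √(4-x²)/((√p + 1/√p - x)²)`
on `[-2,2]` integrates to `1`. -/
theorem mu_plus_is_probability (p : ℕ) (hp : p.Prime) :
    ∫ x in (-2:ℝ)..2,
      (((p : ℝ) - 1) / (2 * π)) * Real.sqrt (4 - x ^ 2) /
        (Real.sqrt p + 1 / Real.sqrt p - x) ^ 2 = 1 := by
  have hp1 : (1 : ℝ) < p := by exact_mod_cast hp.one_lt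
  set q := √(p : ℝ)
  have hq : 1 < q := by simpa [q] using sqrt_lt_sqrt zero_le_one hp1
  have hq2 : q ^ 2 = p := sq_sqrt (by linarith)
  have ha : 2 < q + 1 / q := by
    rw [← sub_pos, show q + 1 / q - 2 = (q - 1) ^ 2 / q by field_simp; ring]
    have : 0 < q - 1 := by linarith
    positivity
  simp_rw [mul_div_assoc]
  rw [intervalIntegral.integral_const_mul, integral_sqrt_four_sub_sq_div_sq ha,
    sqrt_sq_add_inv_sub_four hq.le, ← hq2]
  have hq2_ne : q ^ 2 - 1 ≠ 0 := by nlinarith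
  have hinv_lt : 1 / q < q := by rw [div_lt_iff₀ (by linarith)]; nlinarith
  have hb_ne : q - 1 / q ≠ 0 := sub_ne_zero.mpr hinv_lt.ne'
  field_simp
  ring
end

section
/- Let p > 1 be real and δ ∈ ℂ with δ ≠ 0, δ² ≠ 1. Define A_n = δ^{2n} + δ^{-2n} - (p-1)·(δ^{2n-1} - δ^{-2n+1})/(δ - δ^{-1}) for n ≥ 1 and A_0 = 1. Then for every n ≥ 1, the 'constant-term extraction' identity holds: A_n + (1 - 1/p)·∑_{m=1}^{n} p^m A_{n-m} = δ^{2n} + δ^{-2n} + (1 - 1/p)·∑_{j=-n+1}^{n-1} c_j δ^{2j} with all coefficients c_j = 0; i.e., A_n + (1 - 1/p)(pA_{n-1} + p²A_{n-2} + ⋯ + pⁿA_0) = δ^{2n} + δ^{-2n}. -/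
/-!
Writing `Bₙ` for the left-hand side, splitting off the term `m = 1` of the sum gives the
recursion `Bₙ₊₁ = Aₙ₊₁ - Aₙ + p Bₙ`. The quotients `(δ^{2n-1} - δ^{-2n+1})/(δ - δ⁻¹)` are
`δ`-integers, which grow by `δ^{2n} + δ^{-2n}` from `n` to `n + 1`, so
`Aₙ₊₁ - Aₙ + p (δ^{2n} + δ^{-2n}) = δ^{2n+2} + δ^{-2n-2}` and induction on `n` closes the argument.
-/

open Finset

theorem sum_Icc_one_pow_mul_sub_succ {R : Type*} [CommSemiring R] (p : R) (f : ℕ → R) (n : ℕ) :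
    ∑ m ∈ Icc 1 (n + 1), p ^ m * f (n + 1 - m) = p * (f n + ∑ m ∈ Icc 1 n, p ^ m * f (n - m)) := by
  rw [← insert_Icc_add_one_left_eq_Icc (by omega), sum_insert (by simp), mul_add, mul_sum,
    ← map_add_right_Icc, sum_map]
  simp [pow_succ', mul_assoc]

theorem add_one_sub_inv_mul_sum_Icc_succ {K : Type*} [Field K] {p : K} (hp : p ≠ 0)
    (f : ℕ → K) (n : ℕ) :
    f (n + 1) + (1 - 1 / p) * ∑ m ∈ Icc 1 (n + 1), p ^ m * f (n + 1 - m) =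
      f (n + 1) - f n + p * (f n + (1 - 1 / p) * ∑ m ∈ Icc 1 n, p ^ m * f (n - m)) := by
  rw [sum_Icc_one_pow_mul_sub_succ]
  field_simp
  ring

theorem zpow_odd_sub_div_sub_inv_succ {K : Type*} [Field K] {δ : K} (hδ : δ ≠ 0)
    (hne : δ - δ⁻¹ ≠ 0) (k : ℤ) :
    (δ ^ (2 * (k + 1) - 1) - δ ^ (-(2 * (k + 1)) + 1)) / (δ - δ⁻¹) =
      (δ ^ (2 * k - 1) - δ ^ (-(2 * k) + 1)) / (δ - δ⁻¹) + (δ ^ (2 * k) + δ ^ (-(2 * k))) := by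
  rw [← sub_eq_iff_eq_add', ← sub_div, div_eq_iff hne,
    show 2 * (k + 1) - 1 = 2 * k + 1 by ring, show -(2 * (k + 1)) + 1 = -(2 * k) - 1 by ring]
  simp only [zpow_add₀ hδ, zpow_sub₀ hδ, zpow_one]
  ring

theorem sub_inv_ne_zero_of_sq_ne_one {K : Type*} [Field K] {δ : K} (hδ : δ ≠ 0) (hδ1 : δ ^ 2 ≠ 1) :
    δ - δ⁻¹ ≠ 0 := by
  have : δ ^ 2 - 1 = δ * (δ - δ⁻¹) := by field_simp
  exact right_ne_zero_of_mul (this ▸ sub_ne_zero.mpr hδ1)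

/-- Constant-term extraction identity: with `A₀ = 1` and
`Aₙ = δ^{2n} + δ^{-2n} - (p-1)(δ^{2n-1} - δ^{-2n+1})/(δ - δ^{-1})` for `n ≥ 1`,
one has `Aₙ + (1 - 1/p)(pA_{n-1} + p²A_{n-2} + ⋯ + pⁿA₀) = δ^{2n} + δ^{-2n}`. -/
theorem constant_term_extraction (p : ℝ) (hp : 1 < p) (δ : ℂ) (hδ0 : δ ≠ 0)
    (hδ1 : δ ^ 2 ≠ 1) (A : ℕ → ℂ) (hA0 : A 0 = 1)
    (hA : ∀ n : ℕ, 1 ≤ n →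
      A n = δ ^ (2 * (n : ℤ)) + δ ^ (-(2 * (n : ℤ))) -
        ((p : ℂ) - 1) * (δ ^ (2 * (n : ℤ) - 1) - δ ^ (-(2 * (n : ℤ)) + 1)) /
          (δ - δ⁻¹))
    (n : ℕ) (hn : 1 ≤ n) :
    A n + (1 - 1 / (p : ℂ)) * ∑ m ∈ Finset.Icc 1 n, (p : ℂ) ^ m * A (n - m) =
      δ ^ (2 * (n : ℤ)) + δ ^ (-(2 * (n : ℤ))) := by
  have hp0 : (p : ℂ) ≠ 0 := by exact_mod_cast (zero_lt_one.trans hp).ne'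
  have hne := sub_inv_ne_zero_of_sq_ne_one hδ0 hδ1
  induction n, hn using Nat.le_induction with
  | base =>
    have hfrac :
        (δ ^ (2 * ((1 : ℕ) : ℤ) - 1) - δ ^ (-(2 * ((1 : ℕ) : ℤ)) + 1)) / (δ - δ⁻¹) = 1 := by
      norm_num [div_self hne]
    rw [hA 1 le_rfl, mul_div_assoc, hfrac, Icc_self, sum_singleton, Nat.sub_self, hA0]
    field_simp
    ring
  | succ n hn ih =>
    rw [add_one_sub_inv_mul_sum_Icc_succ hp0, ih, hA (n + 1) (by omega), hA n hn]
    push_cast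
    linear_combination (1 - (p : ℂ)) * zpow_odd_sub_div_sub_inv_succ hδ0 hne n
end

section
/- Let p > 1. For n ≥ 1 define the Laurent polynomial φₙ(T) = p^{n/2}·[Tⁿ + T^{-n} + (1 - 1/p)·(T^{n-2} + T^{n-4} + ⋯ + T^{-(n-2)})] in T = p^s, and φ₀ = 1. With the normalized inner product ⟨Tᵃ, Tᵇ⟩ = 1 if a+b = 0 and 0 otherwise (extended bilinearly), and F_ev(T) = 1 + ∑_{m≥1} A_m T^{2m}p^{-m} with A_m = δ^{2m}+δ^{-2m} - (p-1)(δ^{2m-1}-δ^{-2m+1})/(δ-δ^{-1}), one has ⟨φ_{2n}, F_ev⟩ = δ^{2n} + δ^{-2n} for all n ≥ 1 and ⟨φ₀, F_ev⟩ = 1. -/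
/-!
Only the monomials `T^{-2k}`, `0 ≤ k ≤ n`, of `φ_{2n}` meet `F_ev`, so with `f_k` the coefficient
of `T^{2k}` in `F_ev` the pairing is `p^n ((1 - 1/p) ∑_{k<n} f_k + f_n)`. Write
`A_m = (δ^{2m} + δ^{-2m}) - (p - 1) U_m` with `U_m = (δ^{2m-1} - δ^{1-2m}) / (δ - δ⁻¹)`. Since
`U_{m+1} = U_m + δ^{2m} + δ^{-2m}`, induction gives `p^{n-1} ∑_{k<n} f_k = U_n`, and the pairing
becomes `(p - 1) U_n + A_n = δ^{2n} + δ^{-2n}`.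
-/

open Finset

section EvenKernel

variable {K : Type*} [Field K]

/-- `U_m` of the header; it equals `δ^{2m-2} + δ^{2m-4} + ⋯ + δ^{2-2m}`. -/
def evenKernel (δ : K) (m : ℤ) : K :=
  (δ ^ (2 * m - 1) - δ ^ (-(2 * m) + 1)) / (δ - δ⁻¹)

lemma ne_zero_of_sub_inv_ne_zero {δ : K} (h : δ - δ⁻¹ ≠ 0) : δ ≠ 0 := by
  rintro rfl
  simp at h

lemma sub_inv_ne_zero {δ : K} (h0 : δ ≠ 0) (h1 : δ ^ 2 ≠ 1) : δ - δ⁻¹ ≠ 0 := by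
  intro h
  apply h1
  field_simp at h
  linear_combination h

lemma evenKernel_one {δ : K} (h : δ - δ⁻¹ ≠ 0) : evenKernel δ 1 = 1 := by
  norm_num [evenKernel, div_self h]

lemma evenKernel_add_one {δ : K} (h : δ - δ⁻¹ ≠ 0) (m : ℤ) :
    evenKernel δ (m + 1) = evenKernel δ m + (δ ^ (2 * m) + δ ^ (-(2 * m))) := by
  have hδ := ne_zero_of_sub_inv_ne_zero h
  rw [evenKernel, evenKernel, div_add' _ _ _ h]
  congr 1
  simp only [show 2 * (m + 1) - 1 = 2 * m + 1 by ring,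
    show -(2 * (m + 1)) + 1 = -(2 * m) - 1 by ring, zpow_add₀ hδ, zpow_sub₀ hδ, zpow_one]
  ring

end EvenKernel

section Pairing

variable {K : Type*} [Field K] {p δ : K} {A f : ℕ → K}

lemma pow_mul_sum_range_eq_evenKernel (hδ : δ - δ⁻¹ ≠ 0)
    (hA : ∀ m : ℕ, 1 ≤ m →
      A m = δ ^ (2 * (m : ℤ)) + δ ^ (-(2 * (m : ℤ))) - (p - 1) * evenKernel δ m)
    (hf0 : f 0 = 1) (hf : ∀ k : ℕ, p ^ (k + 1) * f (k + 1) = A (k + 1)) (n : ℕ) :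
    p ^ n * ∑ k ∈ range (n + 1), f k = evenKernel δ (n + 1) := by
  induction n with
  | zero => simp [hf0, evenKernel_one hδ]
  | succ n ih =>
    calc p ^ (n + 1) * ∑ k ∈ range (n + 1 + 1), f k
        = p * (p ^ n * ∑ k ∈ range (n + 1), f k) + p ^ (n + 1) * f (n + 1) := by
          rw [sum_range_succ]; ring
      _ = evenKernel δ (n + 1) + (δ ^ (2 * ((n : ℤ) + 1)) + δ ^ (-(2 * ((n : ℤ) + 1)))) := by
          rw [ih, hf, hA _ le_add_self]; push_cast; ring
      _ = evenKernel δ ((n + 1 : ℕ) + 1) := by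
          rw [← evenKernel_add_one hδ]; push_cast; rfl

lemma sum_range_succ_ite_mul (c : K) (f : ℕ → K) (n : ℕ) :
    ∑ k ∈ range (n + 1), (if k = n then 1 else c) * f k = c * ∑ k ∈ range n, f k + f n := by
  rw [sum_range_succ, if_pos rfl, one_mul, mul_sum]
  congr 1
  exact sum_congr rfl fun k hk => by rw [if_neg (mem_range.mp hk).ne]

lemma pow_mul_pairing_eq (hp : p ≠ 0) (hδ : δ - δ⁻¹ ≠ 0)
    (hA : ∀ m : ℕ, 1 ≤ m →
      A m = δ ^ (2 * (m : ℤ)) + δ ^ (-(2 * (m : ℤ))) - (p - 1) * evenKernel δ m)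
    (hf0 : f 0 = 1) (hf : ∀ k : ℕ, p ^ (k + 1) * f (k + 1) = A (k + 1)) {n : ℕ} (hn : 1 ≤ n) :
    p ^ n * ((1 - 1 / p) * ∑ k ∈ range n, f k + f n) =
      δ ^ (2 * (n : ℤ)) + δ ^ (-(2 * (n : ℤ))) := by
  obtain ⟨m, rfl⟩ := Nat.exists_eq_add_of_le' hn
  calc p ^ (m + 1) * ((1 - 1 / p) * ∑ k ∈ range (m + 1), f k + f (m + 1))
      = (p - 1) * (p ^ m * ∑ k ∈ range (m + 1), f k) + p ^ (m + 1) * f (m + 1) := by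
        field_simp; ring
    _ = _ := by
        rw [pow_mul_sum_range_eq_evenKernel hδ hA hf0 hf, hf, hA _ le_add_self]
        push_cast; ring

end Pairing

lemma sum_Icc_eq_sum_range_neg_two_mul {R : Type*} [AddCommMonoid R] (F : ℤ → R) (n : ℕ)
    (hF : ∀ a, F a ≠ 0 → ∃ k : ℕ, a = -(2 * k)) :
    ∑ a ∈ Icc (-(2 * (n : ℤ))) (2 * n), F a = ∑ k ∈ range (n + 1), F (-(2 * k)) := by
  have hinj : Set.InjOn (fun k : ℕ => -(2 * (k : ℤ))) (range (n + 1)) := by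
    intro a _ b _ h
    simp only at h
    omega
  rw [← sum_image hinj]
  refine (sum_subset (fun a ha => ?_) fun a ha hna => ?_).symm
  · obtain ⟨k, hk, rfl⟩ := mem_image.mp ha
    rw [mem_range] at hk
    rw [mem_Icc]
    omega
  · by_contra h
    obtain ⟨k, rfl⟩ := hF a h
    refine hna (mem_image.mpr ⟨k, mem_range.mpr ?_, rfl⟩)
    rw [mem_Icc] at ha
    omega

/-- `p^{-n/2} φₙ` for `n ≥ 1`, as a coefficient function. -/
noncomputable def sphericalCoeff (p : ℂ) (n : ℕ) (a : ℤ) : ℂ :=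
  if a = (n : ℤ) ∨ a = -(n : ℤ) then 1
  else if a.natAbs < n ∧ ((n : ℤ) - a) % 2 = 0 then 1 - 1 / p
  else 0

lemma sphericalCoeff_two_mul_neg_two_mul (p : ℂ) {n k : ℕ} (hk : k ≤ n) :
    sphericalCoeff p (2 * n) (-(2 * k)) = if k = n then 1 else 1 - 1 / p := by
  rcases hk.eq_or_lt with rfl | hk
  · simp [sphericalCoeff]
  · rw [sphericalCoeff, if_neg (by omega), if_pos (by omega), if_neg hk.ne]

/-- `F_ev` as a coefficient function. -/
noncomputable def evenSeriesCoeff (p : ℂ) (A : ℕ → ℂ) (a : ℤ) : ℂ :=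
  if a = 0 then 1
  else if 0 < a ∧ a % 2 = 0 then A (a.toNat / 2) * p ^ (-(a / 2))
  else 0

lemma exists_eq_two_mul_of_evenSeriesCoeff_ne_zero {p : ℂ} {A : ℕ → ℂ} {a : ℤ}
    (h : evenSeriesCoeff p A a ≠ 0) : ∃ k : ℕ, a = 2 * k := by
  unfold evenSeriesCoeff at h
  split_ifs at h with h0 hpos
  · exact ⟨0, by simp [h0]⟩
  · exact ⟨a.toNat / 2, by omega⟩
  · exact absurd rfl h

lemma pow_mul_evenSeriesCoeff {p : ℂ} (hp : p ≠ 0) (A : ℕ → ℂ) (k : ℕ) :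
    p ^ (k + 1) * evenSeriesCoeff p A (2 * (k + 1 : ℕ)) = A (k + 1) := by
  rw [evenSeriesCoeff, if_neg (by omega), if_pos (by omega),
    show (2 * ((k + 1 : ℕ) : ℤ)).toNat / 2 = k + 1 by omega,
    show 2 * ((k + 1 : ℕ) : ℤ) / 2 = (k + 1 : ℕ) by omega,
    mul_left_comm, ← zpow_natCast, ← zpow_add₀ hp, add_neg_cancel, zpow_zero, mul_one]

/-- Orthogonality of the Satake transforms `φₙ` against `F_ev`: viewing Laurent
polynomials through their coefficient functions and the pairing
`⟨f, g⟩ = ∑_a f(a)·g(-a)` (the constant term of `f·g`), one has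
`⟨φ_{2n}, F_ev⟩ = δ^{2n} + δ^{-2n}` for `n ≥ 1` and `⟨φ₀, F_ev⟩ = 1`. -/
theorem satake_pairing (p : ℝ) (hp : 1 < p) (δ : ℂ) (hδ0 : δ ≠ 0)
    (hδ1 : δ ^ 2 ≠ 1)
    (φ : ℕ → ℤ → ℂ) (Fev : ℤ → ℂ) (A : ℕ → ℂ)
    (hφ0 : ∀ a : ℤ, φ 0 a = if a = 0 then 1 else 0)
    (hφ : ∀ n : ℕ, 1 ≤ n → ∀ a : ℤ,
      φ n a = (Real.sqrt p : ℂ) ^ n *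
        (if a = (n : ℤ) ∨ a = -(n : ℤ) then 1
          else if a.natAbs < n ∧ ((n : ℤ) - a) % 2 = 0 then 1 - 1 / (p : ℂ)
          else 0))
    (hA : ∀ m : ℕ, 1 ≤ m →
      A m = δ ^ (2 * (m : ℤ)) + δ ^ (-(2 * (m : ℤ))) -
        ((p : ℂ) - 1) * (δ ^ (2 * (m : ℤ) - 1) - δ ^ (-(2 * (m : ℤ)) + 1)) /
          (δ - δ⁻¹))
    (hF : ∀ a : ℤ, Fev a =
      if a = 0 then 1
      else if 0 < a ∧ a % 2 = 0 then A (a.toNat / 2) * (p : ℂ) ^ (-(a / 2))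
      else 0) :
    (∀ n : ℕ, 1 ≤ n →
      ∑ a ∈ Finset.Icc (-(2 * (n : ℤ))) (2 * (n : ℤ)), φ (2 * n) a * Fev (-a) =
        δ ^ (2 * (n : ℤ)) + δ ^ (-(2 * (n : ℤ)))) ∧
    (∑ a ∈ Finset.Icc (0 : ℤ) 0, φ 0 a * Fev (-a) = 1) := by
  obtain rfl : Fev = evenSeriesCoeff p A := funext hF
  refine ⟨fun n hn => ?_, by simp [hφ0, evenSeriesCoeff]⟩
  have hp0 : (p : ℂ) ≠ 0 := Complex.ofReal_ne_zero.mpr (by positivity)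
  have hφn (a : ℤ) : φ (2 * n) a = (p : ℂ) ^ n * sphericalCoeff p (2 * n) a := by
    rw [hφ _ (by omega), pow_mul, ← Complex.ofReal_pow, Real.sq_sqrt (by positivity),
      sphericalCoeff]
  rw [sum_Icc_eq_sum_range_neg_two_mul _ n fun a ha =>
    (exists_eq_two_mul_of_evenSeriesCoeff_ne_zero (right_ne_zero_of_mul ha)).imp
      fun k hk => by omega]
  calc ∑ k ∈ range (n + 1), φ (2 * n) (-(2 * k)) * evenSeriesCoeff p A (-(-(2 * k)))
      = p ^ n * ∑ k ∈ range (n + 1), (if k = n then 1 else 1 - 1 / (p : ℂ)) *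
          evenSeriesCoeff p A (2 * k) := by
        rw [mul_sum]
        exact sum_congr rfl fun k hk => by
          rw [hφn, sphericalCoeff_two_mul_neg_two_mul _ (mem_range_succ_iff.mp hk), neg_neg,
            mul_assoc]
    _ = δ ^ (2 * (n : ℤ)) + δ ^ (-(2 * (n : ℤ))) := by
        rw [sum_range_succ_ite_mul]
        refine pow_mul_pairing_eq hp0 (sub_inv_ne_zero hδ0 hδ1) (fun m hm => ?_)
          (by simp [evenSeriesCoeff]) (pow_mul_evenSeriesCoeff hp0 A) hn
        rw [hA m hm, evenKernel, mul_div_assoc]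
end
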